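/- Let $(G_n)_{n\geq 0}$ be a sequence of groups with associative unital homomorphisms $\oplus: G_m \times G_n \to G_{m+n}$, and suppose condition $(\dagger')$ holds only for a cofinal set $S \subseteq \mathbb{N}$ of indices (i.e., for every $n \in S$ and $a \in G_n$ there is $c \in G_{2n}'$ with $a \oplus e_n = (e_n \oplus a)c$, and $S$ is unbounded in $\mathbb{N}$). Then the commutator subgroup of $G_\infty = \operatorname{colim}_n G_n$ is perfect. -/

import Mathlib

/-- Iterated right stabilisation `G n → G k` (for `n ≤ k`) by the unit `e₁ ∈ G 1`. -/
def stabTo (G : ℕ → Type*) [∀ n, Group (G n)]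
    (op : ∀ m n, G m → G n → G (m + n)) {n k : ℕ} (h : n ≤ k) : G n → G k :=
  Nat.leRecOn h (fun {m} (a : G m) => op m 1 a 1)

/-!
Write `x ≡ y` for congruence modulo the commutator subgroup `H'`. If for all `x, y` some
`q ≡ x` commutes with `y`, then `⁅x, y⁆ = q ⁅q⁻¹x, y⁆ q⁻¹` with `q⁻¹x ∈ H'`; applying the same
trick to the second slot turns this into a conjugate of a commutator of two elements of `H'`,
so `H' = ⁅H', H'⁆`. In the colimit, represent `x, y` by `a, b ∈ G n` with `n ∈ S`; then `x` is
the image of `a ⊕ e_n ≡ e_n ⊕ a` by `(†')`, and `e_n ⊕ a` commutes with `b ⊕ e_n`, the image of `y`.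
-/

open scoped commutatorElement

theorem MonoidHom.map_mem_commutator {A B : Type*} [Group A] [Group B] (f : A →* B) {a : A}
    (ha : a ∈ commutator A) : f a ∈ commutator B := by
  have hmap := Subgroup.mem_map_of_mem f ha
  rw [map_commutator_eq] at hmap
  exact Subgroup.commutator_mono le_top le_top hmap

theorem Commute.commutatorElement_mul_left {H : Type*} [Group H] {q y : H} (h : Commute q y)
    (c : H) : ⁅q * c, y⁆ = q * ⁅c, y⁆ * q⁻¹ := by
  simp only [commutatorElement_def, mul_inv_rev, mul_assoc, h.inv_inv.eq]

theorem commutator_commutator_eq_of_forall_exists_commute {H : Type*} [Group H]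
    (h : ∀ x y : H, ∃ c ∈ commutator H, Commute (x * c) y) :
    ⁅commutator H, commutator H⁆ = commutator H := by
  set D := ⁅commutator H, commutator H⁆
  have mem_of_right : ∀ x y : H, (∀ c ∈ commutator H, ⁅c, y⁆ ∈ D) → ⁅x, y⁆ ∈ D := by
    intro x y hy
    obtain ⟨c, hc, hcomm⟩ := h x y
    rw [← mul_inv_cancel_right x c, hcomm.commutatorElement_mul_left]
    exact Subgroup.Normal.conj_mem inferInstance _ (hy _ (inv_mem hc)) _
  have mem_of_left : ∀ y : H, ∀ c ∈ commutator H, ⁅c, y⁆ ∈ D := fun y c hc => by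
    rw [← commutatorElement_inv]
    exact inv_mem (mem_of_right y c fun d hd => Subgroup.commutator_mem_commutator hd hc)
  refine le_antisymm (Subgroup.commutator_le_left _ _) ?_
  rw [commutator_def, Subgroup.commutator_le]
  exact fun x _ y _ => mem_of_right x y (mem_of_left y)

section GradedPairing

variable {G : ℕ → Type*} [∀ n, Group (G n)] {op : ∀ m n, G m → G n → G (m + n)}

theorem op_one_one (hop : ∀ m n (a a' : G m) (b b' : G n),
      op m n (a * a') (b * b') = op m n a b * op m n a' b') (m n : ℕ) :
    op m n 1 1 = 1 := by
  have h := hop m n 1 1 1 1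
  simp only [mul_one] at h
  exact mul_eq_left.mp h.symm

theorem commute_op_one_op_one (hop : ∀ m n (a a' : G m) (b b' : G n),
      op m n (a * a') (b * b') = op m n a b * op m n a' b') {m n : ℕ} (a : G m) (b : G n) :
    Commute (op m n a 1) (op m n 1 b) := by
  simp only [Commute, SemiconjBy, ← hop, mul_one, one_mul]

variable {Ginf : Type*} [Group Ginf] {ι : ∀ n, G n →* Ginf}

theorem range_mono_of_compat (hcompat : ∀ n (a : G n), ι (n + 1) (op n 1 a 1) = ι n a) :
    Monotone fun n => (ι n).range :=
  monotone_nat_of_le_succ fun n _ ⟨a, ha⟩ => ⟨op n 1 a 1, (hcompat n a).trans ha⟩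

theorem map_op_one_of_compat
    (hop : ∀ m n (a a' : G m) (b b' : G n),
      op m n (a * a') (b * b') = op m n a b * op m n a' b')
    (hassoc : ∀ m n k (a : G m) (b : G n) (c : G k),
      op (m + n) k (op m n a b) c
        = cast (congrArg G (Nat.add_assoc m n k).symm) (op m (n + k) a (op n k b c)))
    (hunit_right : ∀ m (a : G m), op m 0 a 1 = a)
    (hcompat : ∀ n (a : G n), ι (n + 1) (op n 1 a 1) = ι n a) (n k : ℕ) (a : G n) :
    ι (n + k) (op n k a 1) = ι n a := by
  induction k with
  | zero => rw [hunit_right]; rfl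
  | succ k ih =>
    have hstep : op (n + k) 1 (op n k a 1) 1 = op n (k + 1) a 1 := by
      rw [hassoc, op_one_one hop]
      -- `n + (k + 1)` and `n + k + 1` are definitionally equal, so the cast is the identity
      rfl
    rw [← hstep]
    exact (hcompat (n + k) _).trans ih

end GradedPairing

theorem commutator_of_colimit_perfect_of_cofinal_dagger_general
    (G : ℕ → Type*) [∀ n, Group (G n)]
    (op : ∀ m n, G m → G n → G (m + n))
    (hop : ∀ m n (a a' : G m) (b b' : G n),
      op m n (a * a') (b * b') = op m n a b * op m n a' b')
    (hassoc : ∀ m n k (a : G m) (b : G n) (c : G k),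
      op (m + n) k (op m n a b) c
        = cast (congrArg G (Nat.add_assoc m n k).symm) (op m (n + k) a (op n k b c)))
    (hunit_right : ∀ m (a : G m), op m 0 a 1 = a)
    (S : Set ℕ) (hcof : ∀ N : ℕ, ∃ s ∈ S, N ≤ s)
    (hdagger : ∀ n ∈ S, ∀ a : G n, ∃ c ∈ commutator (G (n + n)),
      op n n a 1 = op n n 1 a * c)
    (Ginf : Type*) [Group Ginf] (ι : ∀ n, G n →* Ginf)
    (hcompat : ∀ n (a : G n), ι (n + 1) (op n 1 a 1) = ι n a)
    (hsurj : ∀ g : Ginf, ∃ n a, ι n a = g) :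
    ⁅commutator Ginf, commutator Ginf⁆ = commutator Ginf := by
  refine commutator_commutator_eq_of_forall_exists_commute fun x y => ?_
  obtain ⟨n₁, a₁, rfl⟩ := hsurj x
  obtain ⟨n₂, b₂, rfl⟩ := hsurj y
  obtain ⟨n, hnS, hn⟩ := hcof (max n₁ n₂)
  have hmono := range_mono_of_compat hcompat
  obtain ⟨a, ha⟩ := hmono ((le_max_left n₁ n₂).trans hn) ⟨a₁, rfl⟩
  obtain ⟨b, hb⟩ := hmono ((le_max_right n₁ n₂).trans hn) ⟨b₂, rfl⟩
  have hstab := map_op_one_of_compat hop hassoc hunit_right hcompat n n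
  obtain ⟨c, hc, hdag⟩ := hdagger n hnS a
  refine ⟨(ι (n + n) c)⁻¹, inv_mem ((ι (n + n)).map_mem_commutator hc), ?_⟩
  rw [← ha, ← hb, ← hstab a, ← hstab b, hdag, map_mul, mul_inv_cancel_right]
  exact ((commute_op_one_op_one hop b a).map (ι (n + n))).symm

/-- Let `(G n)` be a sequence of groups with associative, unital homomorphic pairings
`⊕ : G m × G n → G (m+n)` satisfying condition `(†')` for a cofinal set `S ⊆ ℕ` of indices: for every `n ∈ S` and
`a ∈ G n` there is `c ∈ G_{2n}'` with `a ⊕ e_n = (e_n ⊕ a) c`.  Let `Ginf` be the colimit of the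
system `-⊕e₁ : G n → G (n+1)` (with structure maps `ι n : G n → Ginf`, which are
compatible, jointly surjective, and identify exactly eventually-equal elements).
Then the commutator subgroup of `Ginf` is perfect. -/
theorem commutator_of_colimit_perfect_of_cofinal_dagger
    (G : ℕ → Type*) [∀ n, Group (G n)]
    (op : ∀ m n, G m → G n → G (m + n))
    (hop : ∀ m n (a a' : G m) (b b' : G n),
      op m n (a * a') (b * b') = op m n a b * op m n a' b')
    (hassoc : ∀ m n k (a : G m) (b : G n) (c : G k),
      op (m + n) k (op m n a b) c
        = cast (congrArg G (Nat.add_assoc m n k).symm) (op m (n + k) a (op n k b c)))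
    (hunit_left : ∀ n (a : G n), op 0 n 1 a = cast (congrArg G (Nat.zero_add n).symm) a)
    (hunit_right : ∀ m (a : G m), op m 0 a 1 = a)
    (S : Set ℕ) (hcof : ∀ N : ℕ, ∃ s ∈ S, N ≤ s)
    (hdagger : ∀ n ∈ S, ∀ a : G n, ∃ c ∈ commutator (G (n + n)),
      op n n a 1 = op n n 1 a * c)
    (Ginf : Type*) [Group Ginf] (ι : ∀ n, G n →* Ginf)
    (hcompat : ∀ n (a : G n), ι (n + 1) (op n 1 a 1) = ι n a)
    (hsurj : ∀ g : Ginf, ∃ n a, ι n a = g)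
    (hinj : ∀ n (a b : G n), ι n a = ι n b →
      ∃ k, ∃ h : n ≤ k, stabTo G op h a = stabTo G op h b) :
    ⁅commutator Ginf, commutator Ginf⁆ = commutator Ginf :=
  commutator_of_colimit_perfect_of_cofinal_dagger_general G op hop hassoc hunit_right S hcof hdagger
    Ginf ι hcompat hsurj
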